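/- Let n ≥ 2, α = n-2, p, q nonnegative integers with m = min(p,q), and define β_k^{(p,q)}(j) = (-1)^j (n-1+p+q-2k)(n-2+p+q-2k-j)! / [4^{k+j} k! j! (n-1+p+q-k)!]. For the polynomial P(z,z̄) = (z|η)^p (z̄|η̄)^q on ℂⁿ (η a fixed unit vector) and h_k(P) = Σ_{j=0}^{m-k} β_k^{(p,q)}(j) |z|^{2j} Δ^{k+j} P, each h_k(P) is a harmonic polynomial and P = Σ_{k=0}^{m} |z|^{2k} h_k(P). -/

import Mathlib

/-- The Wirtinger derivative ∂/∂z_j on functions of n complex variables. -/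
noncomputable def wD {n : ℕ} (j : Fin n) (f : (Fin n → ℂ) → ℂ) : (Fin n → ℂ) → ℂ :=
  fun z => (1 / 2) * (fderiv ℝ f z (Pi.single j 1) - Complex.I * fderiv ℝ f z (Pi.single j Complex.I))

/-- The Wirtinger derivative ∂/∂z̄_j on functions of n complex variables. -/
noncomputable def wDBar {n : ℕ} (j : Fin n) (f : (Fin n → ℂ) → ℂ) : (Fin n → ℂ) → ℂ :=
  fun z => (1 / 2) * (fderiv ℝ f z (Pi.single j 1) + Complex.I * fderiv ℝ f z (Pi.single j Complex.I))

/-- The Euclidean Laplacian on ℝ^{2n} ≅ ℂⁿ in complex coordinates: Δ = 4 Σ_j ∂²/∂z_j∂z̄_j. -/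
noncomputable def cLap {n : ℕ} (f : (Fin n → ℂ) → ℂ) : (Fin n → ℂ) → ℂ :=
  fun z => 4 * ∑ j : Fin n, wD j (wDBar j f) z

/-- The zonal bihomogeneous polynomial P(z,z̄) = (z|η)^p (z|η)̄^q. -/
noncomputable def Ppoly (n p q : ℕ) (η : Fin n → ℂ) : (Fin n → ℂ) → ℂ :=
  fun z => (∑ j, z j * (starRingEnd ℂ) (η j)) ^ p *
    ((starRingEnd ℂ) (∑ j, z j * (starRingEnd ℂ) (η j))) ^ q

/-- The k-th harmonic component h_k(P) = Σ_j β_k^{(p,q)}(j) |z|^{2j} Δ^{k+j} P. -/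
noncomputable def hComp (n p q k : ℕ) (η : Fin n → ℂ) : (Fin n → ℂ) → ℂ :=
  fun z => ∑ j ∈ Finset.range (min p q - k + 1),
    (((-1 : ℝ) ^ j * (((n - 1 + (p + q - 2 * k)) * (n - 2 + (p + q - 2 * k - j)).factorial : ℕ) : ℝ) /
        (((4 ^ (k + j) * k.factorial * j.factorial * (n - 1 + (p + q - k)).factorial : ℕ)) : ℝ) : ℝ) : ℂ) *
      (∑ i, z i * (starRingEnd ℂ) (z i)) ^ j * (cLap^[k + j] (Ppoly n p q η)) z

/-!
Write `s = (z|η)`, `r = |z|²` and `M(j,a,b) = r^j s^a s̄^b`. Since `s` is holomorphic, `s̄` is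
antiholomorphic and `|η| = 1`, the Laplacian acts on these monomials by
`Δ M(j,a,b) = 4 (j (n + j - 1 + a + b) M(j-1,a,b) + a b M(j,a-1,b-1))`.
Hence `Δ^k P = 4^k p^(k) q^(k) M(0,p-k,q-k)` with falling factorials, and `h_k` is an explicit
combination of the `M(j,p-k-j,q-k-j)`. Harmonicity of `h_k` reduces to a two-term recurrence
between the coefficients of consecutive monomials. Collecting powers of `r` in `Σ_k r^k h_k` leaves
`4^l p^(l) q^(l) Σ_{k ≤ l} β_k(l-k)` in front of `M(l,p-l,q-l)`; this sum is `1` for `l = 0` and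
vanishes for `l ≥ 1` by a Wilf–Zeilberger telescoping.
-/

open Finset ComplexConjugate

theorem sum_range_succ_add_eq_zero {M : Type*} [AddCommMonoid M] (f g : ℕ → M) (N : ℕ)
    (hf : f 0 = 0) (hg : g N = 0) (h : ∀ j < N, f (j + 1) + g j = 0) :
    ∑ j ∈ range (N + 1), (f j + g j) = 0 := by
  rw [sum_add_distrib, sum_range_succ' f, sum_range_succ g, hf, hg, add_zero, add_zero,
    ← sum_add_distrib]
  exact sum_eq_zero fun j hj => h j (mem_range.1 hj)

theorem Pi.single_I_eq_smul {ι : Type*} [DecidableEq ι] (i : ι) :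
    (Pi.single i Complex.I : ι → ℂ) = Complex.I • Pi.single i 1 := by
  rw [← Pi.single_smul', smul_eq_mul, mul_one]

@[fun_prop]
theorem contDiff_conj {m : WithTop ℕ∞} : ContDiff ℝ m (conj : ℂ → ℂ) := by
  simpa [funext Complex.conjCLE_apply] using Complex.conjCLE.contDiff (n := m)

section Wirtinger

variable {n : ℕ} (i : Fin n) {f g : (Fin n → ℂ) → ℂ} {z : Fin n → ℂ}

theorem wD_add (hf : DifferentiableAt ℝ f z) (hg : DifferentiableAt ℝ g z) :
    wD i (fun w => f w + g w) z = wD i f z + wD i g z := by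
  simp only [wD, fderiv_fun_add hf hg, add_apply]
  ring

theorem wD_const_mul (c : ℂ) (hf : DifferentiableAt ℝ f z) :
    wD i (fun w => c * f w) z = c * wD i f z := by
  simp only [wD, fderiv_const_mul hf c, smul_apply, smul_eq_mul]
  ring

theorem wDBar_const_mul (c : ℂ) (hf : DifferentiableAt ℝ f z) :
    wDBar i (fun w => c * f w) z = c * wDBar i f z := by
  simp only [wDBar, fderiv_const_mul hf c, smul_apply, smul_eq_mul]
  ring

theorem wD_mul (hf : DifferentiableAt ℝ f z) (hg : DifferentiableAt ℝ g z) :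
    wD i (fun w => f w * g w) z = wD i f z * g z + f z * wD i g z := by
  simp only [wD, fderiv_fun_mul hf hg, add_apply, smul_apply, smul_eq_mul]
  ring

theorem wD_pow (k : ℕ) (hf : DifferentiableAt ℝ f z) :
    wD i (fun w => f w ^ k) z = k * f z ^ (k - 1) * wD i f z := by
  simp only [wD, fderiv_fun_pow k hf, smul_apply, smul_eq_mul, nsmul_eq_mul]
  ring

theorem wD_sum {ι : Type*} (s : Finset ι) {F : ι → (Fin n → ℂ) → ℂ}
    (hF : ∀ j ∈ s, DifferentiableAt ℝ (F j) z) :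
    wD i (fun w => ∑ j ∈ s, F j w) z = ∑ j ∈ s, wD i (F j) z := by
  simp only [wD, fderiv_fun_sum hF, _root_.sum_apply, mul_sum, ← sum_sub_distrib]

theorem wDBar_sum {ι : Type*} (s : Finset ι) {F : ι → (Fin n → ℂ) → ℂ}
    (hF : ∀ j ∈ s, DifferentiableAt ℝ (F j) z) :
    wDBar i (fun w => ∑ j ∈ s, F j w) z = ∑ j ∈ s, wDBar i (F j) z := by
  simp only [wDBar, fderiv_fun_sum hF, _root_.sum_apply, mul_sum, ← sum_add_distrib]

theorem wD_conj (f : (Fin n → ℂ) → ℂ) : wD i (fun w => conj (f w)) z = conj (wDBar i f z) := by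
  have h : fderiv ℝ (fun w => conj (f w)) z = (Complex.conjCLE : ℂ →L[ℝ] ℂ).comp (fderiv ℝ f z) :=
    Complex.conjCLE.comp_fderiv
  simp [wD, wDBar, h, map_ofNat]
  ring

theorem wDBar_conj (f : (Fin n → ℂ) → ℂ) : wDBar i (fun w => conj (f w)) z = conj (wD i f z) := by
  have h : fderiv ℝ (fun w => conj (f w)) z = (Complex.conjCLE : ℂ →L[ℝ] ℂ).comp (fderiv ℝ f z) :=
    Complex.conjCLE.comp_fderiv
  simp [wD, wDBar, h, map_ofNat]

theorem wD_complexLinear (L : (Fin n → ℂ) →L[ℂ] ℂ) : wD i L z = L (Pi.single i 1) := by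
  have h : fderiv ℝ L z = L.restrictScalars ℝ := (L.restrictScalars ℝ).fderiv
  simp only [wD, h, ContinuousLinearMap.coe_restrictScalars', Pi.single_I_eq_smul, map_smul,
    smul_eq_mul, ← mul_assoc, Complex.I_mul_I]
  ring

theorem wDBar_complexLinear (L : (Fin n → ℂ) →L[ℂ] ℂ) : wDBar i L z = 0 := by
  have h : fderiv ℝ L z = L.restrictScalars ℝ := (L.restrictScalars ℝ).fderiv
  simp only [wDBar, h, ContinuousLinearMap.coe_restrictScalars', Pi.single_I_eq_smul, map_smul,
    smul_eq_mul, ← mul_assoc, Complex.I_mul_I]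
  ring

theorem differentiable_wDBar (hf : ContDiff ℝ 2 f) : Differentiable ℝ (wDBar i f) := by
  have : Differentiable ℝ (fderiv ℝ f) :=
    (hf.fderiv_right (m := 1) le_rfl).differentiable one_ne_zero
  unfold wDBar
  fun_prop

theorem cLap_const_mul (c : ℂ) (hf : ContDiff ℝ 2 f) :
    cLap (fun w => c * f w) z = c * cLap f z := by
  have hBar : ∀ i, wDBar i (fun w => c * f w) = fun w => c * wDBar i f w := fun i =>
    funext fun w => wDBar_const_mul i c (hf.differentiable two_ne_zero w)
  simp only [cLap, hBar, wD_const_mul _ c (differentiable_wDBar _ hf z), ← mul_sum]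
  ring

theorem cLap_sum {ι : Type*} (s : Finset ι) {F : ι → (Fin n → ℂ) → ℂ}
    (hF : ∀ j ∈ s, ContDiff ℝ 2 (F j)) :
    cLap (fun w => ∑ j ∈ s, F j w) z = ∑ j ∈ s, cLap (F j) z := by
  have hBar : ∀ i, wDBar i (fun w => ∑ j ∈ s, F j w) = fun w => ∑ j ∈ s, wDBar i (F j) w :=
    fun i => funext fun w => wDBar_sum i s fun j hj => (hF j hj).differentiable two_ne_zero w
  simp only [cLap, hBar, wD_sum _ s fun j hj => differentiable_wDBar _ (hF j hj) z, mul_sum]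
  exact sum_comm

end Wirtinger

namespace Zonal

section Coefficients

variable {n p q : ℕ}

noncomputable def beta (n p q k j : ℕ) : ℝ :=
  (-1 : ℝ) ^ j * (((n - 1 + (p + q - 2 * k)) * (n - 2 + (p + q - 2 * k - j)).factorial : ℕ) : ℝ) /
    (((4 ^ (k + j) * k.factorial * j.factorial * (n - 1 + (p + q - k)).factorial : ℕ)) : ℝ)

noncomputable def coeff (n p q k j : ℕ) : ℝ :=
  beta n p q k j * (4 ^ (k + j) * p.descFactorial (k + j) * q.descFactorial (k + j) : ℕ)

theorem coeff_succ_mul_add_coeff_mul_eq_zero {k j : ℕ} (hn : 2 ≤ n) (h : k + j + 1 ≤ min p q) :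
    coeff n p q k (j + 1) * ((j + 1) * (n + j + (p - (k + (j + 1))) + (q - (k + (j + 1)))) : ℕ)
      + coeff n p q k j * ((p - (k + j)) * (q - (k + j)) : ℕ) = 0 := by
  have hG : n - 2 + (p + q - 2 * k - j) = n - 2 + (p + q - 2 * k - (j + 1)) + 1 := by omega
  have hX : n + j + (p - (k + (j + 1))) + (q - (k + (j + 1)))
      = n - 2 + (p + q - 2 * k - (j + 1)) + 1 := by omega
  have hp : p - (k + j) = p - (k + (j + 1)) + 1 := by omega
  have hq : q - (k + j) = q - (k + (j + 1)) + 1 := by omega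
  simp only [coeff, beta]
  rw [hG, hX, ← add_assoc k j 1, Nat.descFactorial_succ, Nat.descFactorial_succ, hp, hq,
    Nat.factorial_succ (n - 2 + _), Nat.factorial_succ j, pow_succ]
  push_cast
  field_simp
  ring

-- A Wilf–Zeilberger certificate for the sums `∑ₖ β_k(l - k)`; the `if` makes the telescoping
-- sum stop at `k = l + 1`.
noncomputable def betaCert (n p q l k : ℕ) : ℝ :=
  if k ≤ l then
    (-1 : ℝ) ^ (l - k) * ((k * (n - 1 + (p + q - k - l)).factorial : ℕ) : ℝ) /
      (((4 ^ l * k.factorial * (l - k).factorial * (n - 1 + (p + q - k)).factorial : ℕ)) : ℝ)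
  else 0

theorem natCast_mul_beta_eq_betaCert_sub {l k : ℕ} (hn : 2 ≤ n) (hl : l ≤ min p q) (hk : k ≤ l) :
    (l : ℝ) * beta n p q k (l - k) = betaCert n p q l k - betaCert n p q l (k + 1) := by
  rcases hk.eq_or_lt with rfl | hkl
  · obtain ⟨F, hF⟩ : ∃ F, F + 2 * k + 2 = n + p + q := ⟨n + p + q - 2 * k - 2, by omega⟩
    simp only [beta, betaCert, if_pos le_rfl, if_neg (Nat.not_succ_le_self k), Nat.sub_self,
      sub_zero, add_zero, show n - 1 + (p + q - 2 * k) = F + 1 by omega,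
      show n - 2 + (p + q - 2 * k - 0) = F by omega, show n - 1 + (p + q - k - k) = F + 1 by omega,
      Nat.factorial_succ F]
    push_cast
    ring
  · obtain ⟨d, rfl⟩ : ∃ d, l = k + 1 + d := ⟨l - (k + 1), by omega⟩
    obtain ⟨F, hF⟩ : ∃ F, F + 2 * k + d + 3 = n + p + q := ⟨n + p + q - 2 * k - d - 3, by omega⟩
    simp only [beta, betaCert, if_pos hkl.le, if_pos (show k + 1 ≤ k + 1 + d by omega),
      show n - 1 + (p + q - 2 * k) = F + d + 2 by omega,
      show n - 2 + (p + q - 2 * k - (d + 1)) = F by omega,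
      show n - 1 + (p + q - k - (k + 1 + d)) = F + 1 by omega,
      show n - 1 + (p + q - (k + 1) - (k + 1 + d)) = F by omega,
      show n - 1 + (p + q - k) = F + k + d + 1 + 1 by omega,
      show n - 1 + (p + q - (k + 1)) = F + k + d + 1 by omega,
      show k + 1 + d - k = d + 1 by omega, show k + 1 + d - (k + 1) = d by omega,
      show k + (d + 1) = k + 1 + d by omega,
      Nat.factorial_succ F, Nat.factorial_succ (F + k + d + 1), Nat.factorial_succ d,
      Nat.factorial_succ k, pow_succ (-1 : ℝ) d]
    push_cast
    field_simp
    ring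

theorem sum_beta_antidiagonal_eq_zero {l : ℕ} (hn : 2 ≤ n) (hl₀ : l ≠ 0) (hl : l ≤ min p q) :
    ∑ k ∈ range (l + 1), beta n p q k (l - k) = 0 := by
  have h : (l : ℝ) * ∑ k ∈ range (l + 1), beta n p q k (l - k) = 0 := by
    rw [mul_sum, sum_congr rfl fun k hk =>
      natCast_mul_beta_eq_betaCert_sub hn hl (mem_range_succ_iff.1 hk), sum_range_sub']
    simp [betaCert]
  simpa [hl₀] using h

theorem coeff_zero_zero (hn : 2 ≤ n) : coeff n p q 0 0 = 1 := by
  have hF : n - 1 + (p + q - 2 * 0) = n - 2 + (p + q - 2 * 0 - 0) + 1 := by omega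
  simp only [coeff, beta, hF, Nat.factorial_succ]
  field_simp
  simp

theorem sum_coeff_antidiagonal {l : ℕ} (hn : 2 ≤ n) (hl : l ≤ min p q) :
    ∑ i ∈ range (l + 1), coeff n p q i (l - i) = if l = 0 then 1 else 0 := by
  split_ifs with hl₀
  · simp [hl₀, coeff_zero_zero hn]
  · have h : ∀ i ∈ range (l + 1), coeff n p q i (l - i)
        = beta n p q i (l - i) * (4 ^ l * p.descFactorial l * q.descFactorial l : ℕ) :=
      fun i hi => by rw [coeff, Nat.add_sub_cancel' (mem_range_succ_iff.1 hi)]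
    rw [sum_congr rfl h, ← sum_mul, sum_beta_antidiagonal_eq_zero hn hl₀ hl, zero_mul]

end Coefficients

variable {n : ℕ} (η : Fin n → ℂ) (i : Fin n) (z : Fin n → ℂ)

/-- `(z|η)`, bundled as a `ℂ`-linear map so that its Wirtinger derivatives come for free. -/
noncomputable def pairing : (Fin n → ℂ) →L[ℂ] ℂ := ∑ j, conj (η j) • ContinuousLinearMap.proj j

noncomputable def sqNorm (z : Fin n → ℂ) : ℂ := ∑ j, z j * conj (z j)

noncomputable def monomial (j a b : ℕ) (z : Fin n → ℂ) : ℂ :=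
  sqNorm z ^ j * pairing η z ^ a * conj (pairing η z) ^ b

theorem pairing_apply : pairing η z = ∑ j, z j * conj (η j) := by
  simp [pairing, mul_comm]

theorem conj_pairing : conj (pairing η z) = ∑ j, η j * conj (z j) := by
  simp only [pairing_apply, map_sum, map_mul, Complex.conj_conj, mul_comm]

theorem conj_sqNorm : conj (sqNorm z) = sqNorm z := by
  simp only [sqNorm, map_sum, map_mul, Complex.conj_conj, mul_comm]

theorem conj_monomial (j a b : ℕ) : conj (monomial η j a b z) = monomial η j b a z := by
  simp only [monomial, map_mul, map_pow, conj_sqNorm, Complex.conj_conj]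
  ring

@[fun_prop]
theorem contDiff_pairing {m : WithTop ℕ∞} : ContDiff ℝ m (pairing η) :=
  ((pairing η).restrictScalars ℝ).contDiff

@[fun_prop]
theorem contDiff_sqNorm {m : WithTop ℕ∞} : ContDiff ℝ m (sqNorm : (Fin n → ℂ) → ℂ) := by
  unfold sqNorm
  fun_prop

@[fun_prop]
theorem contDiff_monomial {m : WithTop ℕ∞} (j a b : ℕ) : ContDiff ℝ m (monomial η j a b) := by
  unfold monomial
  fun_prop

theorem wD_pairing : wD i (pairing η) z = conj (η i) := by
  simp [wD_complexLinear, pairing_apply, Pi.single_apply]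

theorem wD_conj_pairing : wD i (fun w => conj (pairing η w)) z = 0 := by
  rw [wD_conj, wDBar_complexLinear, map_zero]

theorem wD_apply (k : Fin n) : wD i (fun w => w k) z = (Pi.single i 1 : Fin n → ℂ) k :=
  wD_complexLinear i (ContinuousLinearMap.proj k)

theorem wDBar_apply (k : Fin n) : wDBar i (fun w => w k) z = 0 :=
  wDBar_complexLinear i (ContinuousLinearMap.proj k)

theorem wD_conj_apply (k : Fin n) : wD i (fun w => conj (w k)) z = 0 := by
  rw [wD_conj, wDBar_apply, map_zero]

theorem wD_sqNorm : wD i sqNorm z = conj (z i) := by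
  have hcoord : ∀ k, Differentiable ℝ (fun w : Fin n → ℂ => w k) := fun k => by fun_prop
  have hconj : ∀ k, Differentiable ℝ (fun w : Fin n → ℂ => conj (w k)) := fun k => by fun_prop
  rw [show sqNorm = fun w : Fin n → ℂ => ∑ k, w k * conj (w k) from rfl,
    wD_sum (F := fun k w => w k * conj (w k)) _ _ fun k _ => ((hcoord k).mul (hconj k)) z]
  simp [wD_mul _ (hcoord _ z) (hconj _ z), wD_apply, wD_conj_apply, Pi.single_apply]

theorem wD_monomial (j a b : ℕ) :
    wD i (monomial η j a b) z = j * conj (z i) * monomial η (j - 1) a b z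
      + a * conj (η i) * monomial η j (a - 1) b z := by
  rw [show monomial η j a b = fun w => sqNorm w ^ j * pairing η w ^ a * conj (pairing η w) ^ b
    from rfl, wD_mul, wD_mul, wD_pow, wD_pow, wD_pow, wD_sqNorm, wD_pairing, wD_conj_pairing]
  · simp only [monomial]
    ring
  all_goals apply Differentiable.differentiableAt; fun_prop

theorem wDBar_monomial (j a b : ℕ) :
    wDBar i (monomial η j a b) z = j * z i * monomial η (j - 1) a b z
      + b * η i * monomial η j a (b - 1) z := by
  -- conjugation swaps the exponents of `(z|η)` and its conjugate, and exchanges `∂` with `∂̄`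
  rw [← funext (conj_monomial η · j b a), wDBar_conj, wD_monomial]
  simp [conj_monomial]

theorem natCast_mul_sqNorm_mul_monomial (k a b : ℕ) :
    (k : ℂ) * (sqNorm z * monomial η (k - 1) a b z) = k * monomial η k a b z := by
  cases k with
  | zero => simp
  | succ k => simp only [monomial, Nat.add_sub_cancel, pow_succ]; ring

theorem natCast_mul_pairing_mul_monomial (j k b : ℕ) :
    (k : ℂ) * (pairing η z * monomial η j (k - 1) b z) = k * monomial η j k b z := by
  cases k with
  | zero => simp
  | succ k => simp only [monomial, Nat.add_sub_cancel, pow_succ]; ring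

theorem natCast_mul_conj_pairing_mul_monomial (j a k : ℕ) :
    (k : ℂ) * (conj (pairing η z) * monomial η j a (k - 1) z) = k * monomial η j a k z := by
  cases k with
  | zero => simp
  | succ k => simp only [monomial, Nat.add_sub_cancel, pow_succ]; ring

theorem cLap_monomial (hη : ∑ i, η i * conj (η i) = 1) (j a b : ℕ) :
    cLap (monomial η j a b) z =
      4 * (((j * (n + (j - 1) + a + b) : ℕ) : ℂ) * monomial η (j - 1) a b z
        + ((a * b : ℕ) : ℂ) * monomial η j (a - 1) (b - 1) z) := by
  have hBar : ∀ i, wDBar i (monomial η j a b) = fun w =>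
      j * w i * monomial η (j - 1) a b w + b * η i * monomial η j a (b - 1) w :=
    fun i => funext fun w => wDBar_monomial η i w j a b
  have hDBar : ∀ i, wD i (wDBar i (monomial η j a b)) z =
      j * monomial η (j - 1) a b z
        + j * (j - 1 : ℕ) * monomial η (j - 1 - 1) a b z * (z i * conj (z i))
        + j * a * monomial η (j - 1) (a - 1) b z * (z i * conj (η i))
        + b * j * monomial η (j - 1) a (b - 1) z * (η i * conj (z i))
        + b * a * monomial η j (a - 1) (b - 1) z * (η i * conj (η i)) := by
    intro i
    rw [hBar, wD_add, wD_mul, wD_const_mul, wD_const_mul, wD_apply, wD_monomial, wD_monomial]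
    · simp
      ring
    all_goals apply Differentiable.differentiableAt; fun_prop
  simp only [cLap, hDBar, sum_add_distrib, ← mul_sum, sum_const, card_univ, Fintype.card_fin,
    nsmul_eq_mul, hη]
  rw [← sqNorm.eq_1, ← conj_pairing η z, ← pairing_apply η z]
  push_cast
  linear_combination (4 * j : ℂ) * natCast_mul_sqNorm_mul_monomial η z (j - 1) a b
    + (4 * j : ℂ) * natCast_mul_pairing_mul_monomial η z (j - 1) a b
    + (4 * j : ℂ) * natCast_mul_conj_pairing_mul_monomial η z (j - 1) a b

theorem Ppoly_eq_monomial (p q : ℕ) : Ppoly n p q η = monomial η 0 p q := by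
  funext z
  simp [Ppoly, monomial, pairing_apply]

theorem sqNorm_pow_mul_monomial (k j a b : ℕ) :
    sqNorm z ^ k * monomial η j a b z = monomial η (k + j) a b z := by
  simp only [monomial, pow_add]
  ring

theorem iterate_cLap_Ppoly (hη : ∑ i, η i * conj (η i) = 1) (p q k : ℕ) :
    cLap^[k] (Ppoly n p q η) = fun z => ((4 ^ k * p.descFactorial k * q.descFactorial k : ℕ) : ℂ)
      * monomial η 0 (p - k) (q - k) z := by
  induction k with
  | zero => simp [Ppoly_eq_monomial]
  | succ k ih =>
    funext z
    rw [Function.iterate_succ_apply', ih, cLap_const_mul _ (contDiff_monomial η _ _ _),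
      cLap_monomial η z hη, Nat.sub_sub, Nat.sub_sub, Nat.descFactorial_succ,
      Nat.descFactorial_succ]
    push_cast
    ring

theorem hComp_eq_sum_monomial (hη : ∑ i, η i * conj (η i) = 1) (p q k : ℕ) :
    hComp n p q k η z = ∑ j ∈ range (min p q - k + 1),
      (coeff n p q k j : ℂ) * monomial η j (p - (k + j)) (q - (k + j)) z := by
  refine sum_congr rfl fun j _ => ?_
  rw [iterate_cLap_Ppoly η hη]
  simp only [coeff, beta, monomial, sqNorm]
  push_cast
  ring

theorem cLap_hComp_eq_zero (hn : 2 ≤ n) (hη : ∑ i, η i * conj (η i) = 1) {p q k : ℕ}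
    (hk : k ≤ min p q) : cLap (hComp n p q k η) z = 0 := by
  rw [funext fun w => hComp_eq_sum_monomial η w hη p q k,
    cLap_sum _ fun j _ => contDiff_const.mul (contDiff_monomial η _ _ _)]
  simp only [cLap_const_mul _ (contDiff_monomial η _ _ _), cLap_monomial η z hη, mul_add (R := ℂ)]
  refine sum_range_succ_add_eq_zero _ _ _ (by simp) ?_ fun j hj => ?_
  · have : (p - (k + (min p q - k))) * (q - (k + (min p q - k))) = 0 := by
      rw [Nat.mul_eq_zero]; omega
    simp [this]
  · have hrec : (coeff n p q k (j + 1) : ℂ)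
          * ((j + 1) * (n + j + (p - (k + (j + 1))) + (q - (k + (j + 1)))) : ℕ)
        + coeff n p q k j * ((p - (k + j)) * (q - (k + j)) : ℕ) = 0 := by
      exact_mod_cast coeff_succ_mul_add_coeff_mul_eq_zero hn (by omega)
    rw [Nat.add_sub_cancel, show p - (k + j) - 1 = p - (k + (j + 1)) by omega,
      show q - (k + j) - 1 = q - (k + (j + 1)) by omega]
    linear_combination (4 * monomial η j (p - (k + (j + 1))) (q - (k + (j + 1))) z) * hrec

theorem sum_sqNorm_pow_mul_hComp (hn : 2 ≤ n) (hη : ∑ i, η i * conj (η i) = 1) (p q : ℕ) :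
    ∑ k ∈ range (min p q + 1), sqNorm z ^ k * hComp n p q k η z = Ppoly n p q η z := by
  set m := min p q
  calc ∑ k ∈ range (m + 1), sqNorm z ^ k * hComp n p q k η z
      = ∑ k ∈ range (m + 1), ∑ j ∈ range (m + 1 - k),
          (coeff n p q k j : ℂ) * monomial η (k + j) (p - (k + j)) (q - (k + j)) z := by
        refine sum_congr rfl fun k hk => ?_
        rw [hComp_eq_sum_monomial η z hη, mul_sum,
          show m - k + 1 = m + 1 - k by have := mem_range_succ_iff.1 hk; omega]
        simp only [← sqNorm_pow_mul_monomial, mul_left_comm]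
    _ = ∑ l ∈ range (m + 1), (∑ i ∈ range (l + 1), coeff n p q i (l - i) : ℝ) *
          monomial η l (p - l) (q - l) z := by
        rw [← sum_range_diag_flip]
        refine sum_congr rfl fun l _ => ?_
        push_cast
        rw [sum_mul]
        refine sum_congr rfl fun i hi => ?_
        rw [Nat.add_sub_cancel' (mem_range_succ_iff.1 hi)]
    _ = Ppoly n p q η z := by
        rw [sum_congr rfl fun l hl => by rw [sum_coeff_antidiagonal hn (mem_range_succ_iff.1 hl)]]
        simp [Ppoly_eq_monomial, apply_ite ((↑) : ℝ → ℂ), ite_mul]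

end Zonal

/-- Canonical decomposition of the bihomogeneous polynomial (z|η)^p (z|η)̄^q into harmonic
components: each h_k(P) is harmonic and P = Σ_k |z|^{2k} h_k(P). -/
theorem canonical_decomposition (n : ℕ) (hn : 2 ≤ n) (η : Fin n → ℂ)
    (hη : ∑ j, η j * (starRingEnd ℂ) (η j) = 1) (p q : ℕ) :
    (∀ k ≤ min p q, ∀ z, cLap (hComp n p q k η) z = 0) ∧
    (∀ z, Ppoly n p q η z =
      ∑ k ∈ Finset.range (min p q + 1),
        (∑ i, z i * (starRingEnd ℂ) (z i)) ^ k * hComp n p q k η z) :=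
  ⟨fun _ hk z => Zonal.cLap_hComp_eq_zero η z hn hη hk,
    fun z => (Zonal.sum_sqNorm_pow_mul_hComp η z hn hη p q).symm⟩
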